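/- arXiv:1506.00680 — 2 statements merged into one kernel-verified Lean document; each statement's English description precedes it below -/
import Mathlib

section
/- For any positive reals c_h and c_t, (c_t/(c_t+c_h))·(c_h/(c_h+c_h))·(c_h/c_h) + (c_t/(c_t+c_h))·(c_h/(c_h+c_h))·(c_h/(c_t+c_h)) + (c_h/(c_t+c_h))·(c_t/(c_t+c_t))·(c_h/(c_t+c_h)) = 1/2. -/
/-- Probability computation underlying the robust fair coin flip tile system:
the three assembly sequences ending in `hht` have total probability 1/2,
for any positive concentrations `c_h`, `c_t`. -/
theorem coin_flip_hht_prob (c_h c_t : ℝ) (hh : 0 < c_h) (ht : 0 < c_t) :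
    (c_t / (c_t + c_h)) * (c_h / (c_h + c_h)) * (c_h / c_h)
      + (c_t / (c_t + c_h)) * (c_h / (c_h + c_h)) * (c_h / (c_t + c_h))
      + (c_h / (c_t + c_h)) * (c_t / (c_t + c_t)) * (c_h / (c_t + c_h)) = 1 / 2 := by
  have h1 : c_t + c_h ≠ 0 := by positivity
  have h2 : c_h ≠ 0 := hh.ne'
  have h3 : c_t ≠ 0 := ht.ne'
  field_simp
  ring
end

section
/- Let p ∈ (1/2, 1) and k ∈ ℕ. A process returns the result of a von Neumann extraction if some round among k rounds succeeds (probability of all failing is F_k = (1−2pq)^k with q = 1−p, success yields heads with probability 1/2), and otherwise returns a single Bernoulli(p) flip. Then the overall probability of heads is P = p·F_k + (1−F_k)/2, and |P − (1−P)| = 2·F_k·(p − 1/2) ≤ 2·p^(k+1). -/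
/-- Bias of the bounded fair coin flip extractor: if all `k` rounds fail
(probability `F_k = (1-2pq)^k`, `q = 1-p`) a single Bernoulli(p) flip is
returned, otherwise a fair bit; the overall heads probability is
`P = p·F_k + (1-F_k)/2` and the bias `|P - (1-P)| = 2 F_k (p - 1/2) ≤ 2 p^(k+1)`. -/
theorem bounded_extractor_overall_bias (p : ℝ) (hp : 1 / 2 < p) (hp1 : p < 1) (k : ℕ) :
    let q : ℝ := 1 - p
    let F : ℝ := (1 - 2 * p * q) ^ k
    let P : ℝ := p * F + (1 - F) / 2
    |P - (1 - P)| = 2 * F * (p - 1 / 2) ∧ 2 * F * (p - 1 / 2) ≤ 2 * p ^ (k + 1) := by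
  intro q F P
  have hq0 : 0 ≤ 1 - 2 * p * q := by show (0:ℝ) ≤ 1 - 2 * p * (1 - p); nlinarith [sq_nonneg (2*p-1)]
  have hF0 : 0 ≤ F := pow_nonneg hq0 k
  have hFle : F ≤ p ^ k := pow_le_pow_left₀ hq0 (by show (1:ℝ) - 2 * p * (1 - p) ≤ p; nlinarith) k
  constructor
  · have : P - (1 - P) = 2 * F * (p - 1 / 2) := by simp only [P]; ring
    rw [this, abs_of_nonneg]
    nlinarith
  · have : 2 * p ^ (k + 1) = 2 * p ^ k * p := by ring
    rw [this]
    apply mul_le_mul (by linarith) (by linarith) (by linarith) (by positivity)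
end
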